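/- Let φ(z) = 1 + ∑_{j≥1} c_j z^j and ψ(z) = ∑_{j≥1} α_j c_j z^j be formal power series over ℂ (c_j, α_j ∈ ℂ), let k ≥ 1 be an integer and p ∈ ℂ, and set φ(z)^p := exp(p·log φ(z)). Then for every n ≥ 0, the coefficient of z^n in ψ(z)^k φ(z)^p equals k! · ∑_{m: ‖m‖ = n} (∏_{i=0}^{|m|−k−1}(p−i)) · W_k(m) · c^m / ∏_j m_j!, where W_k(m) denotes the coefficient of s^k in ∏_j (1+α_j s)^{m_j} (equivalently W_k(m) = 𝒫_k(T_1, …, T_k) with T_i = (−1)^i ∑_j m_j α_j^i); here ∏_{i=0}^{|m|−k−1}(p−i) = p(p−1)⋯(p+k−|m|+1) is the falling factorial with |m|−k factors, understood as 1 when |m| = k, and W_k(m) = 0 when k > |m|, so terms with |m| < k vanish. -/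

import Mathlib

open PowerSeries Finset

noncomputable def expPS {R : Type*} [CommRing R] [Algebra ℚ R] (u : PowerSeries R) :
    PowerSeries R :=
  PowerSeries.mk fun n => ∑ k ∈ Finset.range (n + 1),
    ((k.factorial : ℚ)⁻¹ : ℚ) • PowerSeries.coeff n (u ^ k)

/-- Formal logarithm `log(1 + u)` (for `u` with zero constant term). -/
noncomputable def logOneAddPS {R : Type*} [CommRing R] [Algebra ℚ R] (u : PowerSeries R) :
    PowerSeries R :=
  PowerSeries.mk fun n => ∑ k ∈ Finset.range (n + 1),
    (((-1 : ℚ) ^ (k + 1) / k) : ℚ) • PowerSeries.coeff n (u ^ k)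

/-- Complex power `(1 + u)^p := exp(p·log(1+u))` for `u` with zero constant term. -/
noncomputable def onePlusPow (u : PowerSeries ℂ) (p : ℂ) : PowerSeries ℂ :=
  expPS (PowerSeries.C p * logOneAddPS u)

/-- `W_k(m)`: the coefficient of `sᵏ` in `∏ⱼ (1 + αⱼ s)^{mⱼ}`
(equivalently `𝒫ₖ(T₁,…,Tₖ)` with `Tᵢ = (−1)ᶦ ∑ⱼ mⱼ αⱼⁱ`). -/
noncomputable def Wcoeff (α : ℕ → ℂ) (m : ℕ →₀ ℕ) (k : ℕ) : ℂ :=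
  PowerSeries.coeff k (∏ j ∈ m.support, (1 + PowerSeries.C (α j) * PowerSeries.X) ^ m j)

/-!
Put `u = φ - 1`. The series `E_p = exp (p log (1 + X))` satisfies `(1 + X) E_p' = p E_p`, so its
`r`-th coefficient is `p (p - 1) ⋯ (p - r + 1) / r!`, and `φ^p = E_p ∘ u = ∑_r E_p[r] uʳ`. This
reduces the theorem to the coefficients of `ψᵏ uʳ`. For these, adjoin a second variable `s`:
`∑_{j ≥ 1} cⱼ (1 + αⱼ s) zʲ = u + s ψ`. The binomial theorem makes `C(N, k) ψᵏ u^{N-k}` the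
`sᵏ`-coefficient of its `N`-th power, while the multinomial theorem expands that power as
`∑_{|m| = N} (N! / m!) cᵐ z^{‖m‖} ∏ⱼ (1 + αⱼ s)^{mⱼ}`, and the last factor contributes `W_k(m)`
to the `sᵏ`-coefficient.
-/

theorem Finset.sum_pow_eq_sum_finsuppAntidiag {ι R : Type*} [DecidableEq ι] [CommSemiring R]
    (s : Finset ι) (f : ι → R) (N : ℕ) :
    (∑ i ∈ s, f i) ^ N =
      ∑ m ∈ s.finsuppAntidiag N, (Nat.multinomial s m : R) * ∏ i ∈ s, f i ^ m i := by
  rw [sum_pow_eq_sum_piAntidiag, finsuppAntidiag, sum_map, ← sum_attach]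
  rfl

theorem finsum_partition_eq_sum_finsuppAntidiag {M : Type*} [AddCommMonoid M]
    (T : (ℕ →₀ ℕ) → M) {n B : ℕ} (hB : n < B) :
    ∑ᶠ (m : ℕ →₀ ℕ) (_ : m 0 = 0 ∧ (m.sum fun j e => j * e) = n), T m =
      ∑ N ∈ range B, ∑ m ∈ (Icc 1 n).finsuppAntidiag N with (m.sum fun j e => j * e) = n, T m := by
  rw [← sum_biUnion]
  swap
  · intro N₁ _ N₂ _ hN
    refine disjoint_left.mpr fun m h₁ h₂ => hN ?_
    simp only [mem_filter, mem_finsuppAntidiag] at h₁ h₂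
    exact h₁.1.1.symm.trans h₂.1.1
  refine finsum_cond_eq_sum_of_cond_iff T fun {m} _ => ?_
  simp only [mem_biUnion, mem_filter, mem_finsuppAntidiag, mem_range]
  constructor
  · rintro ⟨hm0, hweight⟩
    have hle : ∀ j ∈ m.support, j * m j ≤ n := fun j hj =>
      hweight ▸ single_le_sum (f := fun j => j * m j) (fun _ _ => Nat.zero_le _) hj
    have hsupp : m.support ⊆ Icc 1 n := fun j hj => by
      have hmj := Finsupp.mem_support_iff.mp hj
      have hj0 : j ≠ 0 := by rintro rfl; exact hmj hm0
      exact mem_Icc.mpr ⟨Nat.one_le_iff_ne_zero.mpr hj0,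
        (Nat.le_mul_of_pos_right j (Nat.pos_of_ne_zero hmj)).trans (hle j hj)⟩
    refine ⟨_, ?_, ⟨rfl, hsupp⟩, hweight⟩
    calc ∑ j ∈ Icc 1 n, m j = ∑ j ∈ m.support, m j :=
          (sum_subset hsupp fun j _ hj => Finsupp.notMem_support_iff.mp hj).symm
      _ ≤ ∑ j ∈ m.support, j * m j :=
          sum_le_sum fun j hj => Nat.le_mul_of_pos_left _ (mem_Icc.mp (hsupp hj)).1
      _ = n := hweight
      _ < B := hB
  · rintro ⟨N, _, ⟨_, hsupp⟩, hweight⟩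
    exact ⟨Finsupp.notMem_support_iff.mp fun h => by simpa using hsupp h, hweight⟩

theorem factorial_mul_div_factorial_add_mul_choose {K : Type*} [Field K] [CharZero K]
    (k r : ℕ) (x y : K) :
    (k.factorial : K) * (x / (k + r).factorial * ((k + r).choose k * y)) =
      x / r.factorial * y := by
  have hchoose : ((k + r).choose k : K) * k.factorial * r.factorial = (k + r).factorial := by
    have := Nat.choose_mul_factorial_mul_factorial (Nat.le_add_right k r)
    rw [Nat.add_sub_cancel_left] at this
    exact_mod_cast this
  have hr : (r.factorial : K) ≠ 0 := Nat.cast_ne_zero.mpr (Nat.factorial_ne_zero _)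
  have hkr : ((k + r).factorial : K) ≠ 0 := Nat.cast_ne_zero.mpr (Nat.factorial_ne_zero _)
  field_simp
  linear_combination x * y * hchoose

namespace PowerSeries

section CommRing

variable {R : Type*} [CommRing R]

def mkPos (a : ℕ → R) : R⟦X⟧ := mk fun j => if j = 0 then 0 else a j

theorem coeff_pow_eq_zero_of_lt {v : R⟦X⟧} (hv : constantCoeff v = 0) {n d : ℕ} (h : n < d) :
    coeff n (v ^ d) = 0 :=
  X_pow_dvd_iff.mp (pow_dvd_pow_of_dvd (X_dvd_iff.mpr hv) d) n h

theorem coeff_subst_eq_sum_range (f : R⟦X⟧) {v : R⟦X⟧} (hv : constantCoeff v = 0) {n N : ℕ}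
    (h : n < N) : coeff n (f.subst v) = ∑ d ∈ range N, coeff d f * coeff n (v ^ d) := by
  rw [coeff_subst' (HasSubst.of_constantCoeff_zero' hv)]
  refine finsum_eq_sum_of_support_subset _ fun d hd => ?_
  by_contra hdN
  simp only [mem_coe, mem_range, not_lt] at hdN
  exact hd (by simp [coeff_pow_eq_zero_of_lt hv (h.trans_le hdN)])

theorem coeff_mul_subst (g f : R⟦X⟧) {v : R⟦X⟧} (hv : constantCoeff v = 0) (n : ℕ) :
    coeff n (g * f.subst v) = ∑ d ∈ range (n + 1), coeff d f * coeff n (g * v ^ d) := by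
  have hsubst : ∀ ij ∈ antidiagonal n, coeff ij.1 g * coeff ij.2 (f.subst v) =
      ∑ d ∈ range (n + 1), coeff d f * (coeff ij.1 g * coeff ij.2 (v ^ d)) := by
    intro ij hij
    rw [coeff_subst_eq_sum_range f hv (Finset.Nat.antidiagonal.snd_lt hij), mul_sum]
    exact sum_congr rfl fun d _ => by ring
  rw [coeff_mul, sum_congr rfl hsubst, sum_comm]
  simp_rw [← mul_sum, ← coeff_mul]

theorem coeff_pow_eq_of_X_pow_dvd_sub {f g : R⟦X⟧} {n : ℕ} (h : X ^ (n + 1) ∣ f - g) (N : ℕ) :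
    coeff n (f ^ N) = coeff n (g ^ N) :=
  sub_eq_zero.mp <| by
    rw [← map_sub]
    exact X_pow_dvd_iff.mp (h.trans (sub_dvd_pow_sub_pow f g N)) n n.lt_succ_self

theorem X_pow_dvd_mkPos_sub_sum (a : ℕ → R) (n : ℕ) :
    X ^ (n + 1) ∣ mkPos a - ∑ j ∈ Icc 1 n, C (a j) * X ^ j := by
  refine X_pow_dvd_iff.mpr fun i hi => ?_
  simp only [map_sub, map_sum, coeff_C_mul_X_pow, mkPos, coeff_mk, sum_ite_eq, mem_Icc]
  split_ifs <;> first | (exfalso; omega) | simp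

theorem coeff_mkPos_pow (a : ℕ → R) (n N : ℕ) :
    coeff n (mkPos a ^ N) =
      ∑ m ∈ (Icc 1 n).finsuppAntidiag N with (m.sum fun j e => j * e) = n,
        (m.multinomial : R) * ∏ j ∈ m.support, a j ^ m j := by
  rw [coeff_pow_eq_of_X_pow_dvd_sub (X_pow_dvd_mkPos_sub_sum a n),
    sum_pow_eq_sum_finsuppAntidiag, map_sum, sum_filter]
  refine sum_congr rfl fun m hm => ?_
  rw [mem_finsuppAntidiag] at hm
  have hprod : ∏ j ∈ Icc 1 n, (C (a j) * X ^ j) ^ m j =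
      C (∏ j ∈ m.support, a j ^ m j) * X ^ (m.sum fun j e => j * e) := by
    rw [← prod_subset hm.2 fun j _ hj => by rw [Finsupp.notMem_support_iff.mp hj, pow_zero]]
    simp_rw [mul_pow, ← map_pow, ← pow_mul, prod_mul_distrib, ← map_prod, prod_pow_eq_pow_sum]
    rfl
  rw [hprod, ← map_natCast C, ← mul_assoc, ← map_mul, coeff_C_mul_X_pow,
    Finsupp.multinomial_eq_of_support_subset hm.2]
  simp only [eq_comm]

theorem coeff_coeff_pow_C_X_mul_map_add_map (f g : R⟦X⟧) (n k N : ℕ) :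
    coeff k (coeff n ((C X * map C f + map C g) ^ N)) =
      N.choose k * coeff n (f ^ k * g ^ (N - k)) := by
  have hterm : ∀ i ∈ range (N + 1),
      coeff k (coeff n ((C X * map C f) ^ i * map C g ^ (N - i) * (N.choose i : R⟦X⟧⟦X⟧))) =
        if k = i then N.choose k * coeff n (f ^ k * g ^ (N - k)) else 0 := by
    intro i _
    have hmonomial : (C X * map C f) ^ i * map C g ^ (N - i) * (N.choose i : R⟦X⟧⟦X⟧) =
        C (C (N.choose i : R) * X ^ i) * map C (f ^ i * g ^ (N - i)) := by
      simp only [map_mul, map_pow, map_natCast]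
      ring
    rw [hmonomial, coeff_C_mul, coeff_map, mul_right_comm, ← map_mul, coeff_C_mul_X_pow]
    split_ifs with h
    · subst h; ring
    · rfl
  rw [add_pow, map_sum, map_sum, sum_congr rfl hterm, sum_ite_eq]
  split_ifs with hk
  · rfl
  · rw [Nat.choose_eq_zero_of_lt (by simpa using hk), Nat.cast_zero, zero_mul]

theorem factorial_mul_coeff_of_one_add_X_mul_derivative_eq {F : R⟦X⟧} {p : R}
    (hF : (1 + X) * d⁄dX R F = C p * F) (n : ℕ) :
    (n.factorial : R) * coeff n F = (∏ i ∈ range n, (p - i)) * constantCoeff F := by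
  have hrec : ∀ n : ℕ, ((n : R) + 1) * coeff (n + 1) F = (p - n) * coeff n F := by
    intro n
    have h := congrArg (coeff n) hF
    rcases n with _ | n
    · simp only [add_mul, one_mul, map_add, coeff_zero_X_mul, coeff_derivative, coeff_C_mul] at h
      simpa using h
    · simp only [add_mul, one_mul, map_add, coeff_succ_X_mul, coeff_derivative, coeff_C_mul] at h
      push_cast at h ⊢
      linear_combination h
  induction n with
  | zero => simp
  | succ n ih =>
    rw [Nat.factorial_succ, Nat.cast_mul, prod_range_succ, Nat.cast_succ]
    linear_combination (n.factorial : R) * hrec n + (p - n) * ih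

variable [Algebra ℚ R]

theorem mk_sum_smul_coeff_pow_eq_subst (a : ℕ → ℚ) {v : R⟦X⟧} (hv : constantCoeff v = 0) :
    mk (fun n => ∑ d ∈ range (n + 1), a d • coeff n (v ^ d)) =
      (mk fun d => algebraMap ℚ R (a d)).subst v := by
  ext n
  rw [coeff_mk, coeff_subst_eq_sum_range _ hv n.lt_succ_self]
  exact sum_congr rfl fun d _ => by rw [coeff_mk, Algebra.smul_def]

theorem expPS_eq_subst {v : R⟦X⟧} (hv : constantCoeff v = 0) : expPS v = (exp R).subst v := by
  rw [expPS, mk_sum_smul_coeff_pow_eq_subst _ hv]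
  congr 1
  ext d
  simp [coeff_exp]

/-- `log (1 + X)`; its constant coefficient is `(-1) / 0 = 0`. -/
noncomputable def logOneAddX (R : Type*) [CommRing R] [Algebra ℚ R] : R⟦X⟧ :=
  mk fun k => algebraMap ℚ R ((-1) ^ (k + 1) / k)

theorem logOneAddPS_eq_subst {v : R⟦X⟧} (hv : constantCoeff v = 0) :
    logOneAddPS v = (logOneAddX R).subst v :=
  mk_sum_smul_coeff_pow_eq_subst _ hv

theorem constantCoeff_logOneAddX : constantCoeff (logOneAddX R) = 0 := by
  simp [logOneAddX]

theorem derivative_logOneAddX : d⁄dX R (logOneAddX R) = mk fun n => (-1) ^ n := by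
  ext n
  have h : (-1 : ℚ) ^ (n + 1 + 1) / ↑(n + 1) * (n + 1) = (-1) ^ n := by
    push_cast
    field_simp
    ring
  simpa [logOneAddX, coeff_derivative] using congrArg (algebraMap ℚ R) h

theorem one_add_X_mul_derivative_logOneAddX : (1 + X) * d⁄dX R (logOneAddX R) = 1 := by
  rw [derivative_logOneAddX]
  ext (_ | n)
  · simp
  · simp [add_mul, coeff_succ_X_mul, pow_succ, coeff_one]

noncomputable def onePlusXPow (R : Type*) [CommRing R] [Algebra ℚ R] (p : R) : R⟦X⟧ :=
  (exp R).subst (p • logOneAddX R)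

theorem constantCoeff_onePlusXPow (p : R) : constantCoeff (onePlusXPow R p) = 1 := by
  have h := coeff_subst_eq_sum_range (exp R) (v := p • logOneAddX R)
    (by simp [constantCoeff_logOneAddX]) (n := 0) zero_lt_one
  simpa [onePlusXPow, coeff_exp] using h

theorem one_add_X_mul_derivative_onePlusXPow (p : R) :
    (1 + X) * d⁄dX R (onePlusXPow R p) = C p * onePlusXPow R p := by
  have hsubst : HasSubst (p • logOneAddX R) :=
    HasSubst.of_constantCoeff_zero' (by simp [constantCoeff_logOneAddX])
  rw [onePlusXPow, derivative_subst hsubst, derivative_exp, Derivation.map_smul]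
  simp only [smul_eq_C_mul]
  linear_combination (C p * (exp R).subst (C p * logOneAddX R)) *
    (one_add_X_mul_derivative_logOneAddX (R := R))

end CommRing

theorem coeff_onePlusXPow {K : Type*} [Field K] [Algebra ℚ K] (p : K) (r : ℕ) :
    coeff r (onePlusXPow K p) = (∏ i ∈ range r, (p - i)) / r.factorial := by
  have hr : (r.factorial : K) ≠ 0 := by
    rw [← map_natCast (algebraMap ℚ K)]
    exact (map_ne_zero _).mpr (by positivity)
  rw [eq_div_iff hr, mul_comm, factorial_mul_coeff_of_one_add_X_mul_derivative_eq
    (one_add_X_mul_derivative_onePlusXPow p), constantCoeff_onePlusXPow, mul_one]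

end PowerSeries

theorem onePlusPow_eq_subst {u : ℂ⟦X⟧} (hu : constantCoeff u = 0) (p : ℂ) :
    onePlusPow u p = (onePlusXPow ℂ p).subst u := by
  have hu' := HasSubst.of_constantCoeff_zero' hu
  have hlog : constantCoeff (p • logOneAddX ℂ) = 0 := by simp [constantCoeff_logOneAddX]
  rw [onePlusPow, logOneAddPS_eq_subst hu, ← smul_eq_C_mul, ← subst_smul hu',
    expPS_eq_subst (constantCoeff_subst_eq_zero hu _ hlog), onePlusXPow,
    subst_comp_subst_apply (HasSubst.of_constantCoeff_zero' hlog) hu']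

theorem choose_mul_coeff_mkPos_pow_mul_pow (c α : ℕ → ℂ) (n N k : ℕ) :
    (N.choose k : ℂ) * coeff n (mkPos (fun j => α j * c j) ^ k * mkPos c ^ (N - k)) =
      ∑ m ∈ (Icc 1 n).finsuppAntidiag N with (m.sum fun j e => j * e) = n,
        (m.multinomial : ℂ) * (∏ j ∈ m.support, c j ^ m j) * Wcoeff α m k := by
  -- In `ℂ⟦X⟧⟦X⟧` the inner variable plays the role of `s`, the outer one that of `z`.
  have hV : mkPos (fun j => C (c j) * (1 + C (α j) * X)) =
      C X * map C (mkPos fun j => α j * c j) + map C (mkPos c) := by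
    ext j : 1
    simp only [mkPos, map_add, coeff_C_mul, coeff_map, coeff_mk]
    split_ifs <;> simp only [map_zero, mul_zero, add_zero, map_mul]
    ring
  have h := congrArg (coeff k) (coeff_mkPos_pow (fun j => C (c j) * (1 + C (α j) * X)) n N)
  rw [hV, coeff_coeff_pow_C_X_mul_map_add_map, map_sum] at h
  rw [h]
  refine sum_congr rfl fun m _ => ?_
  simp_rw [mul_pow, prod_mul_distrib, ← map_pow, ← map_prod, ← map_natCast C, ← mul_assoc,
    ← map_mul, coeff_C_mul, Wcoeff]

theorem sum_finsuppAntidiag_eq_choose_mul_coeff (c α : ℕ → ℂ) (p : ℂ) (n N k : ℕ) :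
    ∑ m ∈ (Icc 1 n).finsuppAntidiag N with (m.sum fun j e => j * e) = n,
        (∏ i ∈ range ((m.sum fun _ e => e) - k), (p - i)) * Wcoeff α m k *
          (∏ j ∈ m.support, c j ^ m j) / ∏ j ∈ m.support, ((m j).factorial : ℂ) =
      (∏ i ∈ range (N - k), (p - i)) / N.factorial *
        (N.choose k * coeff n (mkPos (fun j => α j * c j) ^ k * mkPos c ^ (N - k))) := by
  rw [choose_mul_coeff_mkPos_pow_mul_pow, mul_sum]
  refine sum_congr rfl fun m hm => ?_
  obtain ⟨hN, -⟩ := mem_finsuppAntidiag'.mp (mem_filter.mp hm).1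
  have hspec : (∏ j ∈ m.support, ((m j).factorial : ℂ)) * m.multinomial = N.factorial := by
    rw [← hN]
    exact_mod_cast Nat.multinomial_spec m.support m
  have hfact : (∏ j ∈ m.support, ((m j).factorial : ℂ)) ≠ 0 :=
    prod_ne_zero_iff.mpr fun j _ => Nat.cast_ne_zero.mpr (Nat.factorial_ne_zero _)
  have hNfact : (N.factorial : ℂ) ≠ 0 := Nat.cast_ne_zero.mpr (Nat.factorial_ne_zero _)
  rw [hN]
  field_simp
  linear_combination
    -(∏ i ∈ range (N - k), (p - i)) * Wcoeff α m k * (∏ j ∈ m.support, c j ^ m j) * hspec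

theorem coeff_psi_pow_phi_pow_general (c α : ℕ → ℂ) (k : ℕ) (p : ℂ) (n : ℕ) :
    PowerSeries.coeff n
        ((PowerSeries.mk fun j => if j = 0 then 0 else α j * c j) ^ k *
          onePlusPow (PowerSeries.mk fun j => if j = 0 then 0 else c j) p) =
      (k.factorial : ℂ) *
        ∑ᶠ (m : ℕ →₀ ℕ) (_ : m 0 = 0 ∧ (m.sum fun j e => j * e) = n),
          (∏ i ∈ Finset.range ((m.sum fun _ e => e) - k), (p - i)) * Wcoeff α m k *
            (∏ j ∈ m.support, c j ^ m j) / ∏ j ∈ m.support, ((m j).factorial : ℂ) := by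
  have hu : constantCoeff (mkPos c) = 0 := by simp [mkPos]
  change coeff n (mkPos (fun j => α j * c j) ^ k * onePlusPow (mkPos c) p) = _
  rw [onePlusPow_eq_subst hu, coeff_mul_subst _ _ hu,
    finsum_partition_eq_sum_finsuppAntidiag _ (show n < k + (n + 1) by omega), mul_sum,
    sum_range_add _ k (n + 1)]
  simp_rw [sum_finsuppAntidiag_eq_choose_mul_coeff]
  rw [sum_eq_zero (s := range k) fun N hN => by simp [Nat.choose_eq_zero_of_lt (mem_range.mp hN)],
    zero_add]
  refine sum_congr rfl fun r _ => ?_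
  rw [Nat.add_sub_cancel_left, factorial_mul_div_factorial_add_mul_choose, coeff_onePlusXPow]

/-- For `φ(z) = 1 + ∑_{j≥1} cⱼ zʲ`, `ψ(z) = ∑_{j≥1} αⱼ cⱼ zʲ`, an integer `k ≥ 1` and
`p ∈ ℂ`, the coefficient of `zⁿ` in `ψ(z)ᵏ φ(z)^p` equals
`k! · ∑_{m : ‖m‖ = n} (p(p−1)⋯(p+k−|m|+1)) · W_k(m) · c^m / ∏ⱼ mⱼ!`, the sum over
finitely supported sequences `m` (i.e. `m 0 = 0`) with `‖m‖ = n`; the falling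
factorial has `|m| − k` factors (`1` when `|m| = k`), and `W_k(m) = 0` when
`k > |m|`, so terms with `|m| < k` vanish. -/
theorem coeff_psi_pow_phi_pow (c α : ℕ → ℂ) (k : ℕ) (hk : 1 ≤ k) (p : ℂ) (n : ℕ) :
    PowerSeries.coeff n
        ((PowerSeries.mk fun j => if j = 0 then 0 else α j * c j) ^ k *
          onePlusPow (PowerSeries.mk fun j => if j = 0 then 0 else c j) p) =
      (k.factorial : ℂ) *
        ∑ᶠ (m : ℕ →₀ ℕ) (_ : m 0 = 0 ∧ (m.sum fun j e => j * e) = n),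
          (∏ i ∈ Finset.range ((m.sum fun _ e => e) - k), (p - i)) * Wcoeff α m k *
            (∏ j ∈ m.support, c j ^ m j) / ∏ j ∈ m.support, ((m j).factorial : ℂ) :=
  coeff_psi_pow_phi_pow_general c α k p n
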